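/- Let μ be a probability measure on ℝ² and p⁰ ∈ ℝ². Assume there exists c > 0 such that ‖p − p⁰‖ ≥ c for μ-almost every p, and that μ(L) < 1 for every affine line L ⊂ ℝ². Then the 2×2 matrix ∫ (I₂ − (p − p⁰)(p − p⁰)ᵀ/‖p − p⁰‖²) dμ(p) is positive definite. -/

import Mathlib

open Matrix MeasureTheory

/-!
For `x ≠ 0` the quadratic form of `I - u uᵀ / ‖u‖²` at `x` is `‖x‖² - ⟨u, x⟩² / ‖u‖²`, which is
nonnegative by Cauchy–Schwarz. In the plane, Lagrange's identity
`‖u‖² ‖x‖² - ⟨u, x⟩² = ⟨u, x^⊥⟩²` shows that it vanishes only if `u ⊥ x^⊥`. Hence, if the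
integrated form vanished, `μ`-almost every `p` would lie on the line through `p⁰` with normal
`x^⊥`, contradicting `μ(L) < 1`.
-/

namespace Matrix

section DotProduct

variable {n : Type*} [Fintype n]

theorem dotProduct_self_nonneg (u : n → ℝ) : 0 ≤ u ⬝ᵥ u :=
  Finset.sum_nonneg fun i _ => mul_self_nonneg (u i)

theorem sq_le_dotProduct_self (u : n → ℝ) (k : n) : u k ^ 2 ≤ u ⬝ᵥ u := by
  simpa only [dotProduct, sq] using
    Finset.single_le_sum (fun i _ => mul_self_nonneg (u i)) (Finset.mem_univ k)

theorem sq_dotProduct_le (u x : n → ℝ) : (u ⬝ᵥ x) ^ 2 ≤ (u ⬝ᵥ u) * (x ⬝ᵥ x) := by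
  simpa only [dotProduct, sq] using Finset.sum_mul_sq_le_sq_mul_sq Finset.univ u x

end DotProduct

section PerpProjector

variable {n : Type*} [Fintype n] [DecidableEq n]

/-- The orthogonal projection onto `uᗮ`; for `u = 0` division by zero makes it the identity. -/
noncomputable def perpProjector (u : n → ℝ) : Matrix n n ℝ :=
  of fun i j => (1 : Matrix n n ℝ) i j - u i * u j / (u ⬝ᵥ u)

theorem perpProjector_eq (u : n → ℝ) :
    perpProjector u = 1 - (u ⬝ᵥ u)⁻¹ • vecMulVec u u := by
  ext i j
  simp [perpProjector, vecMulVec_apply, div_eq_inv_mul]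

theorem dotProduct_perpProjector_mulVec (u x : n → ℝ) :
    x ⬝ᵥ perpProjector u *ᵥ x = x ⬝ᵥ x - (u ⬝ᵥ x) ^ 2 / (u ⬝ᵥ u) := by
  rw [perpProjector_eq, sub_mulVec, one_mulVec, smul_mulVec, dotProduct_sub, dotProduct_smul,
    vecMulVec_mulVec, dotProduct_smul]
  simp only [smul_eq_mul, op_smul_eq_mul, dotProduct_comm x u]
  ring

theorem perpProjector_posSemidef (u : n → ℝ) : (perpProjector u).PosSemidef := by
  refine posSemidef_iff_dotProduct_mulVec.2 ⟨?_, fun x => ?_⟩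
  · ext i j
    simp only [perpProjector, conjTranspose_apply, of_apply, star_trivial, mul_comm (u j)]
    rw [← transpose_apply (1 : Matrix n n ℝ), transpose_one]
  · rw [star_trivial, dotProduct_perpProjector_mulVec, sub_nonneg]
    exact div_le_of_le_mul₀ (dotProduct_self_nonneg u) (dotProduct_self_nonneg x)
      ((sq_dotProduct_le u x).trans_eq (mul_comm _ _))

theorem abs_perpProjector_apply_le (u : n → ℝ) (i j : n) : |perpProjector u i j| ≤ 2 := by
  have hcoord (k : n) : |u k| ≤ √(u ⬝ᵥ u) := Real.abs_le_sqrt (sq_le_dotProduct_self u k)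
  have hquot : |u i * u j / (u ⬝ᵥ u)| ≤ 1 := by
    rw [abs_div, abs_mul, abs_of_nonneg (dotProduct_self_nonneg u)]
    refine div_le_one_of_le₀ ?_ (dotProduct_self_nonneg u)
    calc |u i| * |u j| ≤ √(u ⬝ᵥ u) * √(u ⬝ᵥ u) :=
          mul_le_mul (hcoord i) (hcoord j) (abs_nonneg _) (Real.sqrt_nonneg _)
      _ = u ⬝ᵥ u := Real.mul_self_sqrt (dotProduct_self_nonneg u)
  have hone : |(1 : Matrix n n ℝ) i j| ≤ 1 := by
    rw [one_apply]
    split_ifs <;> simp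
  calc |perpProjector u i j| ≤ |(1 : Matrix n n ℝ) i j| + |u i * u j / (u ⬝ᵥ u)| :=
        abs_sub _ _
    _ ≤ 2 := by linarith

theorem measurable_perpProjector_apply (i j : n) :
    Measurable fun u : n → ℝ => perpProjector u i j := by
  unfold perpProjector
  fun_prop

end PerpProjector

section Plane

def rot90 (x : Fin 2 → ℝ) : Fin 2 → ℝ := ![-x 1, x 0]

theorem rot90_eq_zero {x : Fin 2 → ℝ} : rot90 x = 0 ↔ x = 0 := by
  simp [rot90, funext_iff, Fin.forall_fin_two, and_comm]

theorem dotProduct_self_mul_dotProduct_self_sub_sq (u x : Fin 2 → ℝ) :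
    (u ⬝ᵥ u) * (x ⬝ᵥ x) - (u ⬝ᵥ x) ^ 2 = (u ⬝ᵥ rot90 x) ^ 2 := by
  simp only [rot90, dotProduct, Fin.sum_univ_two, cons_val_zero, cons_val_one]
  ring

theorem dotProduct_rot90_eq_zero_of_perpProjector {u x : Fin 2 → ℝ} (hx : x ≠ 0)
    (h : x ⬝ᵥ perpProjector u *ᵥ x = 0) : u ⬝ᵥ rot90 x = 0 := by
  rw [dotProduct_perpProjector_mulVec, sub_eq_zero] at h
  rcases (dotProduct_self_nonneg u).eq_or_lt with hu | hu
  · rw [← hu, div_zero] at h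
    exact absurd (dotProduct_self_eq_zero.1 h) hx
  · rw [eq_div_iff hu.ne'] at h
    have hsq := dotProduct_self_mul_dotProduct_self_sub_sq u x
    rw [mul_comm, h, sub_self] at hsq
    exact (pow_eq_zero_iff two_ne_zero).1 hsq.symm

end Plane

section Integral

variable {ι α : Type*} [Fintype ι] [MeasurableSpace α] {μ : Measure α} {F : α → Matrix ι ι ℝ}

theorem integrable_dotProduct_mulVec (hF : ∀ i j, Integrable (fun a => F a i j) μ)
    (x : ι → ℝ) : Integrable (fun a => x ⬝ᵥ F a *ᵥ x) μ := by
  simp only [dotProduct, mulVec, Finset.mul_sum]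
  exact integrable_finsetSum _ fun i _ => integrable_finsetSum _ fun j _ =>
    ((hF i j).mul_const _).const_mul _

theorem dotProduct_mulVec_integral (hF : ∀ i j, Integrable (fun a => F a i j) μ)
    (x : ι → ℝ) :
    x ⬝ᵥ (of fun i j => ∫ a, F a i j ∂μ) *ᵥ x = ∫ a, x ⬝ᵥ F a *ᵥ x ∂μ := by
  simp only [dotProduct, mulVec, of_apply, Finset.mul_sum]
  rw [integral_finsetSum _ fun i _ => integrable_finsetSum _ fun j _ =>
    ((hF i j).mul_const _).const_mul _]
  refine Finset.sum_congr rfl fun i _ => ?_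
  rw [integral_finsetSum _ fun j _ => ((hF i j).mul_const _).const_mul _]
  simp only [integral_const_mul, integral_mul_const]

theorem posDef_integral_of_posSemidef (hF : ∀ i j, Integrable (fun a => F a i j) μ)
    (hpsd : ∀ a, (F a).PosSemidef) (hnondeg : ∀ x ≠ 0, ¬ ∀ᵐ a ∂μ, x ⬝ᵥ F a *ᵥ x = 0) :
    (of fun i j => ∫ a, F a i j ∂μ).PosDef := by
  refine posDef_iff_dotProduct_mulVec.2 ⟨?_, fun x hx => ?_⟩
  · ext i j
    simp only [conjTranspose_apply, of_apply, star_trivial]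
    exact integral_congr_ae (ae_of_all _ fun a => (hpsd a).isHermitian.apply i j)
  · have hnonneg : 0 ≤ fun a => x ⬝ᵥ F a *ᵥ x := fun a => by
      simpa using (hpsd a).dotProduct_mulVec_nonneg x
    rw [star_trivial, dotProduct_mulVec_integral hF]
    refine (integral_nonneg hnonneg).lt_of_ne' fun h => hnondeg x hx ?_
    exact (integral_eq_zero_iff_of_nonneg hnonneg (integrable_dotProduct_mulVec hF x)).1 h

end Integral

end Matrix

theorem limiting_gram_matrix_posdef_general
    (μ : Measure (Fin 2 → ℝ)) [IsProbabilityMeasure μ] (p0 : Fin 2 → ℝ)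
    (hline : ∀ (θ : Fin 2 → ℝ) (k : ℝ), θ ≠ 0 → μ {q | q ⬝ᵥ θ = k} < 1) :
    (Matrix.of fun i j : Fin 2 =>
        ∫ p, ((1 : Matrix (Fin 2) (Fin 2) ℝ) i j -
          (p i - p0 i) * (p j - p0 j) / ((p - p0) ⬝ᵥ (p - p0))) ∂μ).PosDef := by
  refine posDef_integral_of_posSemidef (F := fun p => perpProjector (p - p0))
    (fun i j => ?_) (fun p => perpProjector_posSemidef _) fun x hx hzero => ?_
  · exact Integrable.of_bound
      ((measurable_perpProjector_apply i j).comp (measurable_sub_const p0)).aestronglyMeasurable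
      2 (ae_of_all _ fun p => abs_perpProjector_apply_le _ i j)
  · have hline_ae : ∀ᵐ p ∂μ, p ∈ {q | q ⬝ᵥ rot90 x = p0 ⬝ᵥ rot90 x} := hzero.mono fun p hp =>
      sub_eq_zero.1 <| (sub_dotProduct p p0 _).symm.trans <|
        dotProduct_rot90_eq_zero_of_perpProjector hx hp
    have hcompl : μ {q | q ⬝ᵥ rot90 x = p0 ⬝ᵥ rot90 x}ᶜ = 0 := mem_ae_iff.1 hline_ae
    have hfull := measure_univ_le_add_compl (μ := μ) {q | q ⬝ᵥ rot90 x = p0 ⬝ᵥ rot90 x}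
    rw [measure_univ, hcompl, add_zero] at hfull
    exact (hline _ _ (mt rot90_eq_zero.1 hx)).not_ge hfull

/-- Limiting non-singularity of the noise-free Gram matrix (Proposition 1): if the
sensor distribution `μ` on ℝ² keeps almost every sensor at distance at least `c > 0`
from the source `p⁰` and puts mass `< 1` on every affine line, then the matrix
`∫ (I₂ - (p - p⁰)(p - p⁰)ᵀ / ‖p - p⁰‖²) dμ(p)` (entrywise integral) is positive
definite. -/
theorem limiting_gram_matrix_posdef
    (μ : Measure (Fin 2 → ℝ)) [IsProbabilityMeasure μ] (p0 : Fin 2 → ℝ)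
    (c : ℝ) (hc : 0 < c)
    (hfar : ∀ᵐ p ∂μ, c ≤ Real.sqrt ((p - p0) ⬝ᵥ (p - p0)))
    (hline : ∀ (θ : Fin 2 → ℝ) (k : ℝ), θ ≠ 0 → μ {q | q ⬝ᵥ θ = k} < 1) :
    (Matrix.of fun i j : Fin 2 =>
        ∫ p, ((1 : Matrix (Fin 2) (Fin 2) ℝ) i j -
          (p i - p0 i) * (p j - p0 j) / ((p - p0) ⬝ᵥ (p - p0))) ∂μ).PosDef :=
  limiting_gram_matrix_posdef_general μ p0 hline
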